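/- arXiv:1910.01196 — 3 statements merged into one kernel-verified Lean document; each statement's English description precedes it below -/
import Mathlib

section
/- Let p ≥ 1 and let a : Fin p → ℤ be the imbalances of p learners with ∑_{i} a i = 0. Then there exists a transfer schedule, i.e., a list L of triples (i, j, m) with i ≠ j and m ≥ 0 where each triple subtracts m from coordinate i and adds m to coordinate j, such that L has length at most p − 1 and applying all transfers in L to a yields the zero function (every learner is perfectly balanced). -/
/-- Applying a single transfer `(i, j, m)`: subtract `m` from coordinate `i`
and add `m` to coordinate `j`. -/
def applyTransfer {p : ℕ} (a : Fin p → ℤ) (t : Fin p × Fin p × ℤ) : Fin p → ℤ :=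
  fun k => a k - (if k = t.1 then t.2.2 else 0) + (if k = t.2.1 then t.2.2 else 0)

private lemma cascade {p : ℕ} (a : Fin p → ℤ) :
    ∀ k, k < p → ∃ L : List (Fin p × Fin p × ℤ),
      (∀ t ∈ L, t.1 ≠ t.2.1 ∧ 0 ≤ t.2.2) ∧ L.length ≤ k ∧
      L.foldl applyTransfer a = fun x : Fin p =>
        if x.val < k then 0
        else if x.val = k then (∑ j, if j.val ≤ k then a j else 0)
        else a x := by
  intro k
  induction k with
  | zero =>
    intro hk
    refine ⟨[], by simp, by simp, ?_⟩
    funext x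
    simp only [List.foldl_nil]
    by_cases hx : x.val = 0
    · have hx' : x = ⟨0, hk⟩ := Fin.ext hx
      have : ∀ j : Fin p, (if j.val ≤ 0 then a j else 0) = (if j = x then a j else 0) := by
        intro j
        have : j.val ≤ 0 ↔ j = x := by
          constructor
          · intro h; exact Fin.ext (by omega)
          · intro h; subst h; omega
        simp [this]
      rw [Finset.sum_congr rfl fun j _ => this j]
      simp [hx]
    · simp [hx]
  | succ k ih =>
    intro hk
    obtain ⟨L, hL1, hL2, hL3⟩ := ih (Nat.lt_of_succ_lt hk)
    set s : ℤ := ∑ j, if j.val ≤ k then a j else 0 with hs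
    set i : Fin p := ⟨k, Nat.lt_of_succ_lt hk⟩ with hi
    set j : Fin p := ⟨k + 1, hk⟩ with hj
    have hij : i ≠ j := by simp [hi, hj, Fin.ext_iff]
    have hS : (∑ m, if m.val ≤ k + 1 then a m else 0) = s + a j := by
      have key : ∀ m : Fin p, (if m.val ≤ k + 1 then a m else 0)
          = (if m.val ≤ k then a m else 0) + (if m = j then a m else 0) := by
        intro m
        by_cases hm : m = j
        · subst hm; simp [hj]
        · have hmv : m.val ≠ k + 1 := fun h => hm (Fin.ext h)
          split_ifs with h1 h2 h2 <;> simp_all <;> omega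
      rw [Finset.sum_congr rfl fun m _ => key m, Finset.sum_add_distrib]
      simp [hs]
    by_cases hpos : 0 ≤ s
    · refine ⟨L ++ [(i, j, s)], ?_, ?_, ?_⟩
      · intro t ht
        rcases List.mem_append.1 ht with h | h
        · exact hL1 t h
        · simp at h; subst h; exact ⟨hij, hpos⟩
      · simp; omega
      · rw [List.foldl_append, hL3]
        funext x
        simp only [List.foldl_cons, List.foldl_nil, applyTransfer]
        by_cases hxi : x = i
        · subst hxi
          simp [hij, hi, hj, Fin.ext_iff]
        · by_cases hxj : x = j
          · subst hxj
            have : j ≠ i := Ne.symm hij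
            simp [this, hj, hS]
            simp [hi, Fin.ext_iff]
            ring
          · have h1 : x.val ≠ k := fun h => hxi (Fin.ext h)
            have h2 : x.val ≠ k + 1 := fun h => hxj (Fin.ext h)
            simp only [if_neg hxi, if_neg hxj]
            split_ifs <;> ring_nf <;> omega
    · refine ⟨L ++ [(j, i, -s)], ?_, ?_, ?_⟩
      · intro t ht
        rcases List.mem_append.1 ht with h | h
        · exact hL1 t h
        · simp at h; subst h; exact ⟨Ne.symm hij, show (0:ℤ) ≤ -s by push_neg at hpos; linarith⟩
      · simp; omega
      · rw [List.foldl_append, hL3]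
        funext x
        simp only [List.foldl_cons, List.foldl_nil, applyTransfer]
        by_cases hxi : x = i
        · subst hxi
          simp [hij, hi, hj, Fin.ext_iff]
        · by_cases hxj : x = j
          · subst hxj
            have : j ≠ i := Ne.symm hij
            simp [this, hj, hS]
            simp [hi, Fin.ext_iff]
            ring
          · have h1 : x.val ≠ k := fun h => hxi (Fin.ext h)
            have h2 : x.val ≠ k + 1 := fun h => hxj (Fin.ext h)
            simp only [if_neg hxi, if_neg hxj]
            split_ifs <;> ring_nf <;> omega

/-- If the imbalances of `p ≥ 1` learners sum to zero, there is a
transfer schedule of length at most `p - 1` that balances everyone. -/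
theorem exists_balancing_schedule_length_le
    {p : ℕ} (hp : 1 ≤ p) (a : Fin p → ℤ) (hsum : ∑ i, a i = 0) :
    ∃ L : List (Fin p × Fin p × ℤ),
      (∀ t ∈ L, t.1 ≠ t.2.1 ∧ 0 ≤ t.2.2) ∧
      L.length ≤ p - 1 ∧
      L.foldl applyTransfer a = 0 := by
  obtain ⟨L, h1, h2, h3⟩ := cascade a (p - 1) (by omega)
  refine ⟨L, h1, h2, ?_⟩
  rw [h3]
  funext x
  have hx : x.val ≤ p - 1 := by omega
  by_cases h : x.val < p - 1
  · simp [h]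
  · have hxe : x.val = p - 1 := by omega
    have hall : ∀ m : Fin p, (if m.val ≤ p - 1 then a m else 0) = a m := by
      intro m; rw [if_pos (by omega)]
    simp [h, hxe, Finset.sum_congr rfl fun m _ => hall m, hsum]
end

section
/- Let p ≥ 2 and let a : Fin p → ℤ with ∑_{i} a i = 0 and a i ≠ 0 for every i. Then there exists a balancing transfer schedule S of length at most p − 1 (the greedy schedule), and for every transfer schedule L that balances a, the length of S is at most twice the length of L. Hence the greedy load-balancing algorithm is a 2-approximation algorithm for minimizing the number of transfer messages. -/
lemma foldl_applyTransfer {p : ℕ} (L : List (Fin p × Fin p × ℤ)) (a : Fin p → ℤ) (k : Fin p) :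
    (L.foldl applyTransfer a) k =
      a k + (L.map (fun t => (if k = t.2.1 then t.2.2 else 0) -
        (if k = t.1 then t.2.2 else 0))).sum := by
  induction L generalizing a with
  | nil => simp
  | cons t L ih =>
    simp only [List.foldl_cons, List.map_cons, List.sum_cons, ih (applyTransfer a t)]
    simp only [applyTransfer]
    ring

/-- Prefix sum of the imbalances on indices `≤ n`. -/
def chainSum {p : ℕ} (a : Fin p → ℤ) (n : ℕ) : ℤ :=
  ∑ j : Fin p, if (j : ℕ) ≤ n then a j else 0

lemma chainSum_zero {p : ℕ} (a : Fin p → ℤ) (k : Fin p) (hk : (k : ℕ) = 0) :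
    chainSum a 0 = a k := by
  unfold chainSum
  rw [Finset.sum_eq_single k]
  · simp [hk]
  · intro j _ hj
    have : ¬ ((j : ℕ) ≤ 0) := by
      intro h
      exact hj (Fin.ext (by omega))
    simp [this]
  · simp

lemma chainSum_succ {p : ℕ} (a : Fin p → ℤ) (n : ℕ) (k : Fin p) (hk : (k : ℕ) = n + 1) :
    chainSum a (n + 1) = chainSum a n + a k := by
  unfold chainSum
  have hak : a k = ∑ j : Fin p, if j = k then a j else 0 := by
    rw [Finset.sum_ite_eq']; simp
  rw [hak, ← Finset.sum_add_distrib]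
  apply Finset.sum_congr rfl
  intro j _
  by_cases hj : j = k
  · subst hj
    simp [hk]
  · have hjv : (j : ℕ) ≠ n + 1 := by
      intro h; exact hj (Fin.ext (by omega))
    have : (if j = k then a j else 0) = 0 := by simp [hj]
    by_cases h1 : (j : ℕ) ≤ n
    · have h2 : (j : ℕ) ≤ n + 1 := by omega
      simp [h1, h2, hj]
    · have h2 : ¬ (j : ℕ) ≤ n + 1 := by omega
      simp [h1, h2, hj]

lemma chainSum_last {p : ℕ} (a : Fin p → ℤ) (n : ℕ) (hn : p - 1 ≤ n)
    (hsum : ∑ i, a i = 0) : chainSum a n = 0 := by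
  unfold chainSum
  rw [← hsum]
  apply Finset.sum_congr rfl
  intro j _
  have : (j : ℕ) ≤ n := by have := j.isLt; omega
  simp [this]

/-- The `n`-th step of the chain schedule. -/
def chainStep {p : ℕ} (a : Fin p → ℤ) (hp : 0 < p) (n : ℕ) : Fin p × Fin p × ℤ :=
  if 0 ≤ chainSum a n then
    (⟨min n (p - 1), by omega⟩, ⟨min (n + 1) (p - 1), by omega⟩, chainSum a n)
  else
    (⟨min (n + 1) (p - 1), by omega⟩, ⟨min n (p - 1), by omega⟩, -chainSum a n)

lemma chain_invariant {p : ℕ} (hp : 0 < p) (a : Fin p → ℤ) :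
    ∀ n, n ≤ p - 1 → ∀ k : Fin p,
      (((List.range n).map (chainStep a hp)).foldl applyTransfer a) k =
        if (k : ℕ) < n then 0 else if (k : ℕ) = n then chainSum a n else a k := by
  intro n
  induction n with
  | zero =>
    intro _ k
    by_cases hk : (k : ℕ) = 0
    · simp [hk, chainSum_zero a k hk]
    · simp [hk]
  | succ n ih =>
    intro hn k
    have hn' : n ≤ p - 1 := by omega
    rw [List.range_succ, List.map_append, List.foldl_append]
    have hb := ih hn'
    set b := ((List.range n).map (chainStep a hp)).foldl applyTransfer a with hbdef
    simp only [List.map_cons, List.map_nil, List.foldl_cons, List.foldl_nil]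
    have hminn : min n (p - 1) = n := by omega
    have hminn1 : min (n + 1) (p - 1) = n + 1 := by omega
    have hform : applyTransfer b (chainStep a hp n) k =
        b k - (if (k : ℕ) = n then chainSum a n else 0)
          + (if (k : ℕ) = n + 1 then chainSum a n else 0) := by
      rcases le_or_gt 0 (chainSum a n) with h | h
      · simp only [chainStep, if_pos h, applyTransfer, Fin.ext_iff, hminn, hminn1]
        all_goals split_ifs <;> ring
      · simp only [chainStep, if_neg (not_le.2 h), applyTransfer, Fin.ext_iff, hminn, hminn1]
        all_goals split_ifs <;> ring
    rw [hform, hb k]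
    by_cases h1 : (k : ℕ) < n
    · have h2 : (k : ℕ) ≠ n := by omega
      have h3 : (k : ℕ) ≠ n + 1 := by omega
      have h4 : (k : ℕ) < n + 1 := by omega
      simp [h1, h2, h3, h4]
    · by_cases h2 : (k : ℕ) = n
      · have h3 : (k : ℕ) ≠ n + 1 := by omega
        have h4 : (k : ℕ) < n + 1 := by omega
        simp [h1, h2, h3, h4]
      · by_cases h3 : (k : ℕ) = n + 1
        · have h4 : ¬ (k : ℕ) < n + 1 := by omega
          simp [h1, h2, h3, h4, chainSum_succ a n k h3, add_comm]
        · have h4 : ¬ (k : ℕ) < n + 1 := by omega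
          simp [h1, h2, h3, h4]

/-- The greedy load-balancing algorithm is a 2-approximation:
there is a balancing schedule `S` of length at most `p - 1`, and for every
balancing schedule `L`, the length of `S` is at most twice that of `L`. -/
theorem greedy_balancing_two_approximation
    {p : ℕ} (hp : 2 ≤ p) (a : Fin p → ℤ)
    (hsum : ∑ i, a i = 0)
    (hne : ∀ i, a i ≠ 0) :
    ∃ S : List (Fin p × Fin p × ℤ),
      (∀ t ∈ S, t.1 ≠ t.2.1 ∧ 0 ≤ t.2.2) ∧
      S.length ≤ p - 1 ∧
      S.foldl applyTransfer a = 0 ∧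
      ∀ L : List (Fin p × Fin p × ℤ),
        (∀ t ∈ L, t.1 ≠ t.2.1 ∧ 0 ≤ t.2.2) →
        L.foldl applyTransfer a = 0 →
        S.length ≤ 2 * L.length := by
  have hp0 : 0 < p := by omega
  refine ⟨(List.range (p - 1)).map (chainStep a hp0), ?_, ?_, ?_, ?_⟩
  · intro t ht
    obtain ⟨n, hn, rfl⟩ := List.mem_map.1 ht
    rw [List.mem_range] at hn
    have hminn : min n (p - 1) = n := by omega
    have hminn1 : min (n + 1) (p - 1) = n + 1 := by omega
    have hd : (⟨min n (p - 1), by omega⟩ : Fin p) ≠ ⟨min (n + 1) (p - 1), by omega⟩ := by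
      simp only [ne_eq, Fin.mk.injEq]
      omega
    unfold chainStep
    split_ifs with h
    · exact ⟨hd, h⟩
    · exact ⟨hd.symm, neg_nonneg.mpr (not_le.1 h).le⟩
  · simp
  · funext k
    have := chain_invariant hp0 a (p - 1) le_rfl k
    rw [this]
    have hk : (k : ℕ) < p := k.isLt
    by_cases h1 : (k : ℕ) < p - 1
    · simp [h1]
    · have h2 : (k : ℕ) = p - 1 := by omega
      simp [h1, h2, chainSum_last a (p - 1) le_rfl hsum]
  · intro L hL hbal
    have key : ∀ i : Fin p, ∃ t ∈ L, t.1 = i ∨ t.2.1 = i := by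
      intro i
      by_contra hcon
      push_neg at hcon
      have h0 : (L.foldl applyTransfer a) i = 0 := by rw [hbal]; rfl
      rw [foldl_applyTransfer] at h0
      have hz : (L.map (fun t => (if i = t.2.1 then t.2.2 else 0) -
          (if i = t.1 then t.2.2 else 0))).sum = 0 := by
        apply List.sum_eq_zero
        intro x hx
        obtain ⟨t, htL, rfl⟩ := List.mem_map.1 hx
        have := hcon t htL
        have h1 : i ≠ t.1 := fun h => this.1 h.symm
        have h2 : i ≠ t.2.1 := fun h => this.2 h.symm
        simp [h1, h2]
      rw [hz, add_zero] at h0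
      exact hne i h0
    have hcard : p ≤ 2 * L.length := by
      have hsub : (Finset.univ : Finset (Fin p)) ⊆
          L.toFinset.biUnion (fun t => ({t.1, t.2.1} : Finset (Fin p))) := by
        intro i _
        obtain ⟨t, htL, hti⟩ := key i
        rw [Finset.mem_biUnion]
        refine ⟨t, List.mem_toFinset.2 htL, ?_⟩
        rcases hti with h | h <;> simp [← h]
      calc p = (Finset.univ : Finset (Fin p)).card := by simp
        _ ≤ (L.toFinset.biUnion (fun t => ({t.1, t.2.1} : Finset (Fin p)))).card :=
            Finset.card_le_card hsub
        _ ≤ ∑ t ∈ L.toFinset, ({t.1, t.2.1} : Finset (Fin p)).card :=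
            Finset.card_biUnion_le
        _ ≤ ∑ _t ∈ L.toFinset, 2 := by
            apply Finset.sum_le_sum
            intro t _
            calc ({t.1, t.2.1} : Finset (Fin p)).card
                ≤ ({t.2.1} : Finset (Fin p)).card + 1 := Finset.card_insert_le _ _
              _ ≤ 2 := by simp
        _ = 2 * L.toFinset.card := by rw [Finset.sum_const, smul_eq_mul, mul_comm]
        _ ≤ 2 * L.length := by
            have := L.toFinset_card_le
            omega
    simp only [List.length_map, List.length_range]
    omega
end

section
/- Let p ≥ 1 and let a : Fin p → ℤ with ∑_{i} a i = 0 and a not identically zero. Then there exist indices i and j with a i > 0 and a j < 0; moreover, letting m = min (a i) (−(a j)) and letting a' be obtained from a by subtracting m at coordinate i and adding m at coordinate j (all other coordinates unchanged), the number of indices k with a' k ≠ 0 is strictly less than the number of indices k with a k ≠ 0, and ∑_{i} a' i = 0. -/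
/-- Key invariant of the greedy load-balancing step: if the
imbalances sum to zero and are not all zero, there is a surplus learner `i` and
a deficit learner `j`; transferring `m = min (a i) (-(a j))` from `i` to `j`
strictly decreases the number of imbalanced learners and preserves the zero
sum. -/
theorem greedy_step_decreases_imbalanced_count
    {p : ℕ} (hp : 1 ≤ p) (a : Fin p → ℤ)
    (hsum : ∑ i, a i = 0)
    (hne : a ≠ 0) :
    ∃ i j : Fin p, 0 < a i ∧ a j < 0 ∧
      ∀ a' : Fin p → ℤ,
        (a' = fun k => a k - (if k = i then min (a i) (-(a j)) else 0)
                           + (if k = j then min (a i) (-(a j)) else 0)) →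
        (Finset.univ.filter fun k => a' k ≠ 0).card
            < (Finset.univ.filter fun k => a k ≠ 0).card ∧
        ∑ k, a' k = 0 := by
  -- find a surplus index
  have hi : ∃ i, 0 < a i := by
    by_contra h
    push_neg at h
    have : ∀ k ∈ Finset.univ, a k = 0 :=
      (Finset.sum_eq_zero_iff_of_nonpos (fun k _ => h k)).mp hsum
    exact hne (funext fun k => this k (Finset.mem_univ k))
  have hj : ∃ j, a j < 0 := by
    by_contra h
    push_neg at h
    have : ∀ k ∈ Finset.univ, a k = 0 :=
      (Finset.sum_eq_zero_iff_of_nonneg (fun k _ => h k)).mp hsum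
    exact hne (funext fun k => this k (Finset.mem_univ k))
  obtain ⟨i, hi⟩ := hi
  obtain ⟨j, hj⟩ := hj
  have hij : i ≠ j := by
    intro h; rw [h] at hi; exact absurd hj (not_lt.mpr hi.le)
  refine ⟨i, j, hi, hj, fun a' ha' => ?_⟩
  set m := min (a i) (-(a j)) with hm
  have ha'i : a' i = a i - m := by simp [ha', hij]
  have ha'j : a' j = a j + m := by simp [ha', hij.symm, hij]
  have ha'k : ∀ k, k ≠ i → k ≠ j → a' k = a k := by
    intro k h1 h2; simp [ha', h1, h2]
  constructor
  · -- card decreases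
    apply Finset.card_lt_card
    constructor
    · intro k hk
      simp only [Finset.mem_filter, Finset.mem_univ, true_and] at hk ⊢
      by_cases h1 : k = i
      · subst h1; exact hi.ne'
      by_cases h2 : k = j
      · subst h2; exact hj.ne
      · rw [ha'k k h1 h2] at hk; exact hk
    · intro hsub
      rcases le_total (a i) (-(a j)) with h | h
      · have : a' i = 0 := by rw [ha'i, hm, min_eq_left h]; ring
        have hmem : i ∈ Finset.univ.filter fun k => a k ≠ 0 := by
          simp [hi.ne']
        have := hsub hmem
        simp only [Finset.mem_filter, Finset.mem_univ, true_and] at this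
        exact this ‹a' i = 0›
      · have : a' j = 0 := by rw [ha'j, hm, min_eq_right h]; ring
        have hmem : j ∈ Finset.univ.filter fun k => a k ≠ 0 := by
          simp [hj.ne]
        have := hsub hmem
        simp only [Finset.mem_filter, Finset.mem_univ, true_and] at this
        exact this ‹a' j = 0›
  · -- sum preserved
    rw [ha']
    simp [Finset.sum_add_distrib, Finset.sum_sub_distrib,
      Finset.sum_ite_eq', hsum]
end
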